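/- arXiv:math/0402069 — 6 statements merged into one kernel-verified Lean document; each statement's English description precedes it below -/
import Mathlib

section
/- Let g be a 2-step nilpotent Lie algebra with abelian complex structure and structural constants E^α_{kj} as above. An element μ = Σ μ^i_j ω̄^j⊗T_i + Σ μ^i_α ω̄^α⊗T_i + Σ μ^β_j ω̄^j⊗W_β + Σ μ^β_α ω̄^α⊗W_β of g^{*(0,1)} ⊗ g^{1,0} satisfies ∂̄μ = 0 if and only if Σ_i (μ^i_j E^α_{ki} - μ^i_k E^α_{ji}) = 0 and Σ_i μ^i_α E^β_{ji} = 0 for all j, k, α, β. -/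
open Finset

noncomputable section

/-- The derivative `∂̄_{ē_p} v` of a `(1,0)`-vector with coefficient vector `v`,
in the direction of the `(0,1)`-basis vector with index `p` (`Sum.inl k`
denotes `T̄_k`, `Sum.inr α` denotes `W̄_α`); the result has coefficients only
along the central vectors `W_β`:  `∂̄_{T̄_k} T_i = Σ_β E^β_{ki} W_β`,
`∂̄_{W̄_α} = 0`. -/
def Dfun {n m : ℕ} (E : Fin m → Fin n → Fin n → ℂ)
    (p : Fin n ⊕ Fin m) (v : Fin n ⊕ Fin m → ℂ) :
    Fin n ⊕ Fin m → ℂ :=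
  fun r => match p, r with
  | .inl k, .inr β => ∑ i, E β k i * v (.inl i)
  | _, _ => 0

/-- `∂̄μ` of an element `μ ∈ g^{*(0,1)} ⊗ g^{1,0}`, given by its coefficient
matrix `μ q r` (= coefficient of basis vector `e_r` in `μ(ē_q)`), evaluated on
the pair of `(0,1)`-basis vectors `(ē_p, ē_q)`; brackets of `(0,1)`-vectors
vanish since the complex structure is abelian. -/
def dbarFun {n m : ℕ} (E : Fin m → Fin n → Fin n → ℂ)
    (μ : Fin n ⊕ Fin m → Fin n ⊕ Fin m → ℂ)
    (p q : Fin n ⊕ Fin m) : Fin n ⊕ Fin m → ℂ :=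
  fun r => Dfun E p (μ q) r - Dfun E q (μ p) r

/-- Lemma 3 of the paper: `μ = Σ μ^i_j ω̄^j⊗T_i + Σ μ^i_α ω̄^α⊗T_i +
Σ μ^β_j ω̄^j⊗W_β + Σ μ^β_α ω̄^α⊗W_β` is `∂̄`-closed iff
`Σ_i (μ^i_j E^α_{ki} - μ^i_k E^α_{ji}) = 0` and `Σ_i μ^i_α E^β_{ji} = 0`. -/
theorem dbar_closed_iff {n m : ℕ} (E : Fin m → Fin n → Fin n → ℂ)
    (μ : Fin n ⊕ Fin m → Fin n ⊕ Fin m → ℂ) :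
    (∀ p q r, dbarFun E μ p q r = 0) ↔
      ((∀ j k α, ∑ i, (μ (.inl j) (.inl i) * E α k i
          - μ (.inl k) (.inl i) * E α j i) = 0) ∧
       (∀ α β j, ∑ i, μ (.inr α) (.inl i) * E β j i = 0)) := by
  constructor
  · intro h
    constructor
    · intro j k α
      have := h (.inl k) (.inl j) (.inr α)
      simp only [dbarFun, Dfun] at this
      rw [← Finset.sum_sub_distrib] at this
      rw [← this]
      exact Finset.sum_congr rfl (fun i _ => by ring)
    · intro α β j
      have := h (.inl j) (.inr α) (.inr β)
      simp only [dbarFun, Dfun, sub_zero] at this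
      rw [← this]
      exact Finset.sum_congr rfl (fun i _ => by ring)
  · rintro ⟨h1, h2⟩ p q r
    match p, q, r with
    | .inl k, .inl j, .inr α =>
      simp only [dbarFun, Dfun]
      rw [← Finset.sum_sub_distrib]
      rw [← h1 j k α]
      exact Finset.sum_congr rfl (fun i _ => by ring)
    | .inl j, .inr α, .inr β =>
      simp only [dbarFun, Dfun, sub_zero]
      rw [← h2 α β j]
      exact Finset.sum_congr rfl (fun i _ => by ring)
    | .inr α, .inl j, .inr β =>
      simp only [dbarFun, Dfun, zero_sub, neg_eq_zero]
      rw [← h2 α β j]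
      exact Finset.sum_congr rfl (fun i _ => by ring)
    | .inl _, .inl _, .inl _ => simp [dbarFun, Dfun]
    | .inl _, .inr _, .inl _ => simp [dbarFun, Dfun]
    | .inr _, .inl _, .inl _ => simp [dbarFun, Dfun]
    | .inr _, .inr _, _ => simp [dbarFun, Dfun]
end
end

section
/- Let g be a 2-step nilpotent Lie algebra with abelian complex structure, and let μ, ν ∈ g^{*(0,1)} ⊗ g^{1,0} both be ∂̄-closed and satisfy Condition A (i.e. Σ_i (μ^i_j F^α_{ki} - μ^i_k F^α_{ji}) = 0 and Σ_i μ^i_α F^β_{ji} = 0 for all indices, and likewise for ν). Then the Schouten–Nijenhuis bracket {μ, ν} vanishes identically. -/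
open Finset

noncomputable section

/-- The structural constants `F^α_{kj} = -conj (E^α_{jk})`. -/
def Ffun {n m : ℕ} (E : Fin m → Fin n → Fin n → ℂ) :
    Fin m → Fin n → Fin n → ℂ :=
  fun α k j => -(starRingEnd ℂ) (E α j k)

/-- Condition A of the paper (Definition 5.1):
`Σ_i (μ^i_j F^α_{ki} - μ^i_k F^α_{ji}) = 0` and `Σ_i μ^i_α F^β_{ji} = 0`. -/
def CondA {n m : ℕ} (E : Fin m → Fin n → Fin n → ℂ)
    (μ : Fin n ⊕ Fin m → Fin n ⊕ Fin m → ℂ) : Prop :=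
  (∀ j k α, ∑ i, (μ (.inl j) (.inl i) * Ffun E α k i
      - μ (.inl k) (.inl i) * Ffun E α j i) = 0) ∧
  (∀ α β j, ∑ i, μ (.inr α) (.inl i) * Ffun E β j i = 0)

/-- The scalar `(ι_v dω̄^a)(ē_q)`, the contraction of `dω̄^a` with the
`(1,0)`-vector with coefficients `v`, evaluated on the `(0,1)`-basis vector
`ē_q`:  `ι_{T_i} dω̄^α = -Σ_h conj(E^α_{ih}) ω̄^h`, all other contractions
vanish. -/
def contrFun {n m : ℕ} (E : Fin m → Fin n → Fin n → ℂ)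
    (v : Fin n ⊕ Fin m → ℂ) (a q : Fin n ⊕ Fin m) : ℂ :=
  match a, q with
  | .inr α, .inl h => -∑ i, v (.inl i) * (starRingEnd ℂ) (E α i h)
  | _, _ => 0

/-- The Schouten–Nijenhuis bracket `{μ, ν}` of two invariant vector-valued
`(0,1)`-forms on a 2-step nilmanifold with abelian complex structure, given on
decomposables by `{ω̄⊗V, ω̄'⊗V'} = ω̄'∧ι_{V'}dω̄ ⊗ V + ω̄∧ι_V dω̄' ⊗ V'`
(the term `[V,V']` vanishes as `J` is abelian), evaluated on `(ē_p, ē_q)`. -/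
def BrFun {n m : ℕ} (E : Fin m → Fin n → Fin n → ℂ)
    (μ ν : Fin n ⊕ Fin m → Fin n ⊕ Fin m → ℂ)
    (p q : Fin n ⊕ Fin m) : Fin n ⊕ Fin m → ℂ :=
  fun r =>
    (∑ a, (contrFun E (ν p) a q - contrFun E (ν q) a p) * μ a r) +
    (∑ a, (contrFun E (μ p) a q - contrFun E (μ q) a p) * ν a r)

lemma contr_diff_zero {n m : ℕ} (E : Fin m → Fin n → Fin n → ℂ)
    (μ : Fin n ⊕ Fin m → Fin n ⊕ Fin m → ℂ) (hA : CondA E μ)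
    (p q a : Fin n ⊕ Fin m) :
    contrFun E (μ p) a q - contrFun E (μ q) a p = 0 := by
  obtain ⟨h1, h2⟩ := hA
  rcases a with i | α
  · simp [contrFun]
  rcases p with j | β <;> rcases q with k | γ
  · have := h1 j k α
    simp only [Ffun, Finset.sum_sub_distrib, mul_neg, Finset.sum_neg_distrib,
      sub_eq_zero] at this ⊢
    simp only [contrFun]
    linear_combination this
  · have := h2 γ α j
    simp only [Ffun, mul_neg, Finset.sum_neg_distrib, neg_eq_zero] at this
    simp [contrFun, this]
  · have := h2 β α k
    simp only [Ffun, mul_neg, Finset.sum_neg_distrib, neg_eq_zero] at this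
    simp [contrFun, this]
  · simp [contrFun]

/-- If `μ` and `ν` are both `∂̄`-closed and satisfy Condition A, then their
Schouten–Nijenhuis bracket `{μ, ν}` vanishes identically. -/
theorem schouten_bracket_vanishes {n m : ℕ}
    (E : Fin m → Fin n → Fin n → ℂ)
    (μ ν : Fin n ⊕ Fin m → Fin n ⊕ Fin m → ℂ)
    (hμ : ∀ p q r, dbarFun E μ p q r = 0)
    (hν : ∀ p q r, dbarFun E ν p q r = 0)
    (hμA : CondA E μ) (hνA : CondA E ν) :
    ∀ p q r, BrFun E μ ν p q r = 0 := by
  intro p q r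
  simp [BrFun, contr_diff_zero E μ hμA, contr_diff_zero E ν hνA]
end
end

section
/- Let g be a 2-step nilpotent Lie algebra with abelian complex structure, and let μ ∈ g^{*(0,1)} ⊗ g^{1,0} be ∂̄-closed and satisfy Condition A. Then the deformed distribution spanned by S̄_j = T̄_j + μ(T̄_j) and V̄_α = W̄_α + μ(W̄_α) is an abelian subalgebra of g_ℂ, i.e. all mutual Lie brackets [S̄_j, S̄_k], [S̄_j, V̄_α], [V̄_α, V̄_β] vanish. -/
open Finset

private theorem lie_sum' {L : Type*} [LieRing L] [LieAlgebra ℂ L] (x : L) {ι : Type*}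
    (s : Finset ι) (f : ι → L) : ⁅x, ∑ i ∈ s, f i⁆ = ∑ i ∈ s, ⁅x, f i⁆ :=
  map_sum (LieAlgebra.ad ℂ L x) f s

private theorem sum_lie' {L : Type*} [LieRing L] [LieAlgebra ℂ L] (y : L) {ι : Type*}
    (s : Finset ι) (f : ι → L) : ⁅∑ i ∈ s, f i, y⁆ = ∑ i ∈ s, ⁅f i, y⁆ := by
  rw [← lie_skew, lie_sum', ← Finset.sum_neg_distrib]
  exact Finset.sum_congr rfl fun i _ => lie_skew (f i) y

/-- If `μ` is `∂̄`-closed and satisfies Condition A, then the deformed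
distribution spanned by `S̄_j = T̄_j + μ(T̄_j)` and `V̄_α = W̄_α + μ(W̄_α)` is an
abelian subalgebra of the complexified Lie algebra: all mutual brackets
vanish.  Here `L` is the complexification of a 2-step nilpotent Lie algebra
with abelian complex structure, `T, W` a `(1,0)`-basis (complement of center,
center) and `Tb, Wb` its conjugate, with structural constants `E, F`. -/
theorem deformed_distribution_abelian {n m : ℕ} {L : Type*}
    [LieRing L] [LieAlgebra ℂ L]
    (T Tb : Fin n → L) (W Wb : Fin m → L)
    (E F : Fin m → Fin n → Fin n → ℂ)
    (hbr : ∀ k j, ⁅Tb k, T j⁆ = (∑ α, E α k j • W α) + ∑ α, F α k j • Wb α)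
    (hab10 : ∀ j k, ⁅T j, T k⁆ = 0)
    (hab01 : ∀ j k, ⁅Tb j, Tb k⁆ = 0)
    (hWcen : ∀ α (x : L), ⁅W α, x⁆ = 0)
    (hWbcen : ∀ α (x : L), ⁅Wb α, x⁆ = 0)
    (μ : Fin n ⊕ Fin m → Fin n ⊕ Fin m → ℂ)
    -- ∂̄μ = 0:
    (hclosed1 : ∀ j k α, ∑ i, (μ (.inl j) (.inl i) * E α k i
        - μ (.inl k) (.inl i) * E α j i) = 0)
    (hclosed2 : ∀ α β j, ∑ i, μ (.inr α) (.inl i) * E β j i = 0)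
    -- Condition A:
    (hA1 : ∀ j k α, ∑ i, (μ (.inl j) (.inl i) * F α k i
        - μ (.inl k) (.inl i) * F α j i) = 0)
    (hA2 : ∀ α β j, ∑ i, μ (.inr α) (.inl i) * F β j i = 0)
    (S : Fin n → L) (V : Fin m → L)
    (hS : ∀ j, S j = Tb j + (∑ i, μ (.inl j) (.inl i) • T i)
        + ∑ β, μ (.inl j) (.inr β) • W β)
    (hV : ∀ α, V α = Wb α + (∑ i, μ (.inr α) (.inl i) • T i)
        + ∑ β, μ (.inr α) (.inr β) • W β) :
    (∀ j k, ⁅S j, S k⁆ = 0) ∧ (∀ j α, ⁅S j, V α⁆ = 0) ∧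
      (∀ α β, ⁅V α, V β⁆ = 0) := by

  have hcenW : ∀ (x : L) α, ⁅x, W α⁆ = 0 := fun x α => by
    rw [← lie_skew, hWcen, neg_zero]
  have hcenWb : ∀ (x : L) α, ⁅x, Wb α⁆ = 0 := fun x α => by
    rw [← lie_skew, hWbcen, neg_zero]
  have hTTb : ∀ i k, ⁅T i, Tb k⁆ = -⁅Tb k, T i⁆ := fun i k => by rw [← lie_skew]
  have key : ∀ (c : Fin n → ℂ) j, ⁅Tb j, ∑ i, c i • T i⁆
      = (∑ α, (∑ i, c i * E α j i) • W α) + ∑ α, (∑ i, c i * F α j i) • Wb α := by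
    intro c j
    rw [lie_sum']
    simp only [lie_smul, hbr, smul_add, Finset.smul_sum, smul_smul]
    rw [Finset.sum_add_distrib]
    congr 1
    · rw [Finset.sum_comm]
      exact Finset.sum_congr rfl fun α _ => (Finset.sum_smul).symm
    · rw [Finset.sum_comm]
      exact Finset.sum_congr rfl fun α _ => (Finset.sum_smul).symm
  refine ⟨?_, ?_, ?_⟩
  · intro j k
    have h1 : ⁅S j, S k⁆ = ⁅Tb j, ∑ i, μ (.inl k) (.inl i) • T i⁆
        - ⁅Tb k, ∑ i, μ (.inl j) (.inl i) • T i⁆ := by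
      rw [hS j, hS k]
      simp only [lie_add, add_lie, lie_sum', sum_lie', lie_smul, smul_lie, hab01, hab10,
        hWcen, hcenW, hWbcen, hcenWb, hTTb, smul_zero, Finset.sum_const_zero,
        add_zero, zero_add, smul_neg, Finset.sum_neg_distrib]
      abel
    rw [h1, key, key]
    have hE : ∀ α, (∑ i, μ (.inl k) (.inl i) * E α j i)
        - (∑ i, μ (.inl j) (.inl i) * E α k i) = 0 := by
      intro α
      have h := hclosed1 j k α
      rw [Finset.sum_sub_distrib] at h
      linear_combination -h
    have hF : ∀ α, (∑ i, μ (.inl k) (.inl i) * F α j i)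
        - (∑ i, μ (.inl j) (.inl i) * F α k i) = 0 := by
      intro α
      have h := hA1 j k α
      rw [Finset.sum_sub_distrib] at h
      linear_combination -h
    rw [sub_eq_zero]
    congr 1
    · exact Finset.sum_congr rfl fun α _ => by rw [sub_eq_zero.mp (hE α)]
    · exact Finset.sum_congr rfl fun α _ => by rw [sub_eq_zero.mp (hF α)]
  · intro j α
    have h1 : ⁅S j, V α⁆ = ⁅Tb j, ∑ i, μ (.inr α) (.inl i) • T i⁆ := by
      rw [hS j, hV α]
      simp only [lie_add, add_lie, lie_sum', sum_lie', lie_smul, smul_lie, hab10,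
        hWcen, hcenW, hWbcen, hcenWb, smul_zero, Finset.sum_const_zero,
        add_zero, zero_add]
    rw [h1, key]
    have hE : ∀ β, (∑ i, μ (.inr α) (.inl i) * E β j i) = 0 := fun β => hclosed2 α β j
    have hF : ∀ β, (∑ i, μ (.inr α) (.inl i) * F β j i) = 0 := fun β => hA2 α β j
    simp only [hE, hF, zero_smul, Finset.sum_const_zero, add_zero]
  · intro α β
    rw [hV α, hV β]
    simp only [lie_add, add_lie, lie_sum', sum_lie', lie_smul, smul_lie, hab10,
      hWcen, hcenW, hWbcen, hcenWb, smul_zero, Finset.sum_const_zero,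
      add_zero, zero_add]
end

section
/- Let g be a 2-step nilpotent Lie algebra with abelian complex structure whose (1,0)-part of the center is spanned by a single W (one-dimensional complex center over the complexification in the relevant sense), with structural constants E_{kj} (Greek index dropped). Suppose that for all j,k,l,m the relation E_{km}·conj(E_{lj}) = E_{jl}·conj(E_{mk}) holds. Then |E_{km}| = |E_{mk}| for all k, m, and if not all E_{km} vanish, there exists a real number θ such that e^{iθ} E_{jl} = conj(E_{lj}) for every pair (j,l). -/
open Complex ComplexConjugate

/-! Specialising the relation to `(j, l) = (m, k)` gives `|E_{km}|² = |E_{mk}|²`. Specialising it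
to a fixed pair `(k₀, m₀)` with `E_{k₀m₀} ≠ 0` shows that `conj (E_{lj}) = u · E_{jl}` for the single
constant `u = conj (E_{m₀k₀}) / E_{k₀m₀}`, which has modulus one by the first part. -/

section

variable {ι : Type*} {E : ι → ι → ℂ}

theorem norm_eq_norm_swap_of_mul_conj_eq
    (h : ∀ j k l m, E k m * conj (E l j) = E j l * conj (E m k)) (k m : ι) :
    ‖E k m‖ = ‖E m k‖ := by
  have hsq : ‖E k m‖ ^ 2 = ‖E m k‖ ^ 2 := by
    simpa only [norm_mul, Complex.norm_conj, sq] using congrArg (‖·‖) (h m k k m)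
  exact (pow_left_inj₀ (norm_nonneg _) (norm_nonneg _) two_ne_zero).mp hsq

theorem exists_norm_eq_one_mul_eq_conj_swap_of_mul_conj_eq
    (h : ∀ j k l m, E k m * conj (E l j) = E j l * conj (E m k)) {k₀ m₀ : ι}
    (hE : E k₀ m₀ ≠ 0) :
    ∃ u : ℂ, ‖u‖ = 1 ∧ ∀ j l, u * E j l = conj (E l j) := by
  refine ⟨conj (E m₀ k₀) / E k₀ m₀, ?_, fun j l => ?_⟩
  · rw [norm_div, Complex.norm_conj, norm_eq_norm_swap_of_mul_conj_eq h m₀ k₀,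
      div_self (norm_ne_zero_iff.mpr hE)]
  · rw [div_mul_eq_mul_div, div_eq_iff hE, mul_comm (conj (E l j)), h j k₀ l m₀, mul_comm]

end

/-- For a 2-step nilpotent Lie algebra with abelian complex structure and
1-dimensional center (structural constants `E_{kj}`, Greek index dropped), the
consequence `E_{km}·conj(E_{lj}) = E_{jl}·conj(E_{mk})` of Condition A implies
`|E_{km}| = |E_{mk}|` for all `k, m`, and if not all `E_{km}` vanish, there is
a real `θ` with `e^{iθ} E_{jl} = conj (E_{lj})` for every pair `(j,l)`. -/
theorem one_dim_center_symmetry {n : ℕ} (E : Fin n → Fin n → ℂ)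
    (h : ∀ j k l m, E k m * (starRingEnd ℂ) (E l j)
        = E j l * (starRingEnd ℂ) (E m k)) :
    (∀ k m, ‖E k m‖ = ‖E m k‖) ∧
    ((∃ k m, E k m ≠ 0) → ∃ θ : ℝ,
      ∀ j l, Complex.exp (θ * Complex.I) * E j l = (starRingEnd ℂ) (E l j)) := by
  refine ⟨norm_eq_norm_swap_of_mul_conj_eq h, ?_⟩
  rintro ⟨k₀, m₀, hE⟩
  obtain ⟨u, hu, hconj⟩ := exists_norm_eq_one_mul_eq_conj_swap_of_mul_conj_eq h hE
  obtain ⟨θ, rfl⟩ := (Complex.norm_eq_one_iff u).mp hu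
  exact ⟨θ, hconj⟩
end

section
/- Consider the 6-dimensional real Lie algebra p₆ with basis X₁,X₂,X₃,X₄,Z₁,Z₂ and nonzero brackets [X₁,X₂] = -½Z₁, [X₁,X₄] = -½Z₂, [X₂,X₃] = -½Z₂ (all others zero). This defines a 2-step nilpotent Lie algebra, and the endomorphism J with JX₁ = X₂, JX₂ = -X₁, JX₃ = -X₄, JX₄ = X₃, JZ₁ = -Z₂, JZ₂ = Z₁ is an abelian complex structure on p₆. -/
noncomputable section

/-- The bracket of the 6-dimensional Lie algebra `p₆` in coordinates
`(X₁,X₂,X₃,X₄,Z₁,Z₂)`:  `[X₁,X₂] = -½Z₁`, `[X₁,X₄] = -½Z₂`,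
`[X₂,X₃] = -½Z₂`, all other brackets zero. -/
def p6b (x y : Fin 6 → ℝ) : Fin 6 → ℝ :=
  ![0, 0, 0, 0,
    -(1/2) * (x 0 * y 1 - x 1 * y 0),
    -(1/2) * (x 0 * y 3 - x 3 * y 0) - (1/2) * (x 1 * y 2 - x 2 * y 1)]

/-- The endomorphism `J` of `p₆`: `JX₁ = X₂`, `JX₂ = -X₁`, `JX₃ = -X₄`,
`JX₄ = X₃`, `JZ₁ = -Z₂`, `JZ₂ = Z₁`. -/
def p6J (x : Fin 6 → ℝ) : Fin 6 → ℝ :=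
  ![-(x 1), x 0, x 3, -(x 2), x 5, -(x 4)]

theorem vec6_five {α} (a b c d e f : α) : ![a,b,c,d,e,f] 5 = f := rfl

theorem vec6_four {α} (a b c d e f : α) : ![a,b,c,d,e,f] 4 = e := rfl

/-- The bracket of `p₆` satisfies the Jacobi identity and is antisymmetric,
defines a 2-step nilpotent Lie algebra, and `J` is an abelian complex
structure: `J² = -1` and `[JA,JB] = [A,B]` for all `A, B`. -/
theorem p6_abelian_complex_structure :
    (∀ x y z, p6b (p6b x y) z + p6b (p6b y z) x + p6b (p6b z x) y = 0) ∧
    (∀ x y, p6b x y = -p6b y x) ∧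
    (∀ x y z, p6b (p6b x y) z = 0) ∧
    (∀ x, p6J (p6J x) = -x) ∧
    (∀ x y, p6b (p6J x) (p6J y) = p6b x y) := by
  refine ⟨?_, ?_, ?_, ?_, ?_⟩ <;> intros <;> funext i <;>
    fin_cases i <;>
    simp [p6b, p6J, Matrix.cons_val_zero, Matrix.cons_val_one, Matrix.cons_val_succ, vec6_five, vec6_four] <;> ring
end
end

section
/- For w₆ with the abelian structure above (only nonzero structural constants E₁₂ = -1, F₂₁ = 1), an element μ = Σ μ^i_j ω̄^j⊗T_i + μ^i₃ ω̄⊗T_i + μ³_j ω̄^j⊗W + μ³₃ ω̄⊗W of g^{*(0,1)}⊗g^{1,0} satisfies ∂̄μ = 0 if and only if μ²₂ = 0 and μ²₃ = 0. Hence the kernel of ∂̄₁ on g^{*(0,1)}⊗g^{1,0} has complex dimension 7, and the first Lie-algebra Dolbeault cohomology H¹_∂̄(g^{1,0}) has complex dimension 6. -/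
open Finset

noncomputable section

/-- The Lie-algebra Dolbeault operator in a fixed direction:  for
`p = Sum.inl k` (direction `T̄_k`) it sends a `(1,0)`-vector with coefficients
`v` to `Σ_{i,β} E^β_{ki} v_i W_β`; for `p = Sum.inr α` (direction `W̄_α`) it is
zero. -/
def DL {n m : ℕ} (E : Fin m → Fin n → Fin n → ℂ) (p : Fin n ⊕ Fin m) :
    ((Fin n ⊕ Fin m) → ℂ) →ₗ[ℂ] ((Fin n ⊕ Fin m) → ℂ) :=
  match p with
  | .inl k => LinearMap.pi (fun r => match r with
      | .inl _ => 0
      | .inr β => ∑ i, E β k i • LinearMap.proj (Sum.inl i))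
  | .inr _ => 0

/-- `∂̄₀ : g^{1,0} → g^{*(0,1)} ⊗ g^{1,0}`, `(∂̄₀ V) (ē_q) = ∂̄_{ē_q} V`. -/
def Dbar0 {n m : ℕ} (E : Fin m → Fin n → Fin n → ℂ) :
    ((Fin n ⊕ Fin m) → ℂ) →ₗ[ℂ]
      ((Fin n ⊕ Fin m) → (Fin n ⊕ Fin m) → ℂ) :=
  LinearMap.pi fun q => DL E q

/-- `∂̄₁ : g^{*(0,1)} ⊗ g^{1,0} → g^{*(0,2)} ⊗ g^{1,0}`,
`(∂̄₁ μ)(ē_p, ē_q) = ∂̄_{ē_p}(μ ē_q) - ∂̄_{ē_q}(μ ē_p)` (brackets of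
`(0,1)`-vectors vanish as the structure is abelian). -/
def Dbar1 {n m : ℕ} (E : Fin m → Fin n → Fin n → ℂ) :
    ((Fin n ⊕ Fin m) → (Fin n ⊕ Fin m) → ℂ) →ₗ[ℂ]
      ((Fin n ⊕ Fin m) → (Fin n ⊕ Fin m) → (Fin n ⊕ Fin m) → ℂ) :=
  LinearMap.pi fun p => LinearMap.pi fun q =>
    (DL E p).comp (LinearMap.proj q) - (DL E q).comp (LinearMap.proj p)

/-- The structural constants of `w₆` with its abelian complex structure:
`n = 2`, `m = 1`, and the only nonzero constant is `E₁₂ = -1`. -/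
def Ew6 : Fin 1 → Fin 2 → Fin 2 → ℂ :=
  fun _ k j => if k = 0 ∧ j = 1 then -1 else 0

lemma DL_w6 (p : Fin 2 ⊕ Fin 1) (v : (Fin 2 ⊕ Fin 1) → ℂ) (r : Fin 2 ⊕ Fin 1) :
    DL Ew6 p v r =
      (if p = Sum.inl 0 ∧ (∃ b, r = Sum.inr b) then -v (Sum.inl 1) else 0) := by
  cases p with
  | inl k =>
    cases r with
    | inl i => simp [DL]
    | inr b =>
      fin_cases k <;> simp [DL, Ew6, Fin.sum_univ_two]
  | inr a => simp [DL]

lemma dbar1_closed_iff (μ : (Fin 2 ⊕ Fin 1) → (Fin 2 ⊕ Fin 1) → ℂ) :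
    Dbar1 Ew6 μ = 0 ↔
      (μ (.inl 1) (.inl 1) = 0 ∧ μ (.inr 0) (.inl 1) = 0) := by
  constructor
  · intro h
    constructor
    · have := congrFun (congrFun (congrFun h (Sum.inl 0)) (Sum.inl 1)) (Sum.inr 0)
      simpa [Dbar1, DL_w6] using this
    · have := congrFun (congrFun (congrFun h (Sum.inl 0)) (Sum.inr 0)) (Sum.inr 0)
      simpa [Dbar1, DL_w6] using this
  · rintro ⟨h1, h2⟩
    funext p q r
    simp only [Dbar1, LinearMap.pi_apply, LinearMap.sub_apply, LinearMap.comp_apply,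
      LinearMap.proj_apply, Pi.sub_apply, DL_w6, Pi.zero_apply]
    rcases p with k | a <;> rcases q with k' | a'
    all_goals try fin_cases k
    all_goals try fin_cases k'
    all_goals try fin_cases a
    all_goals try fin_cases a'
    all_goals simp [h1, h2]

/-- The evaluation map `μ ↦ (μ²₂, μ²₃)`. -/
def evB : ((Fin 2 ⊕ Fin 1) → ℂ) →ₗ[ℂ] ℂ := LinearMap.proj (Sum.inl 1)

def evA (p : Fin 2 ⊕ Fin 1) :
    ((Fin 2 ⊕ Fin 1) → (Fin 2 ⊕ Fin 1) → ℂ) →ₗ[ℂ] ((Fin 2 ⊕ Fin 1) → ℂ) :=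
  LinearMap.proj p

def Phi : ((Fin 2 ⊕ Fin 1) → (Fin 2 ⊕ Fin 1) → ℂ) →ₗ[ℂ] (Fin 2 → ℂ) :=
  LinearMap.pi ![evB.comp (evA (Sum.inl 1)), evB.comp (evA (Sum.inr 0))]

lemma ker_dbar1 : LinearMap.ker (Dbar1 Ew6) = LinearMap.ker Phi := by
  ext μ
  simp only [LinearMap.mem_ker]
  rw [dbar1_closed_iff]
  constructor
  · rintro ⟨h1, h2⟩
    funext i
    fin_cases i <;> simp [Phi, evA, evB, h1, h2]
  · intro h
    constructor
    · simpa [Phi, evA, evB] using congrFun h 0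
    · simpa [Phi, evA, evB] using congrFun h 1

lemma phi_surj : Function.Surjective Phi := by
  intro c
  refine ⟨fun p q => if p = Sum.inl 1 ∧ q = Sum.inl 1 then c 0
    else if p = Sum.inr 0 ∧ q = Sum.inl 1 then c 1 else 0, ?_⟩
  funext i
  fin_cases i <;> simp [Phi, evA, evB]

lemma finrank_ker_dbar1 : Module.finrank ℂ (LinearMap.ker (Dbar1 Ew6)) = 7 := by
  rw [ker_dbar1]
  have h := LinearMap.finrank_range_add_finrank_ker Phi
  have hr : LinearMap.range Phi = ⊤ := LinearMap.range_eq_top.mpr phi_surj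
  rw [hr] at h
  have hdom : Module.finrank ℂ ((Fin 2 ⊕ Fin 1) → (Fin 2 ⊕ Fin 1) → ℂ) = 9 := by
    simp [Module.finrank_pi_fintype]
  have htop : Module.finrank ℂ (⊤ : Submodule ℂ (Fin 2 → ℂ)) = 2 := by
    simp
  omega

/-- Generator of the range of `∂̄₀`. -/
def w6gen : (Fin 2 ⊕ Fin 1) → (Fin 2 ⊕ Fin 1) → ℂ :=
  fun q r => if q = Sum.inl 0 ∧ r = Sum.inr 0 then 1 else 0

lemma dbar0_apply (v : (Fin 2 ⊕ Fin 1) → ℂ) :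
    Dbar0 Ew6 v = (-v (Sum.inl 1)) • w6gen := by
  funext q r
  simp only [Dbar0, LinearMap.pi_apply, DL_w6, Pi.smul_apply, w6gen, smul_eq_mul]
  rcases r with i | b
  · simp
  · fin_cases b
    rcases q with k | a
    · fin_cases k <;> simp
    · fin_cases a; simp

lemma range_dbar0 : LinearMap.range (Dbar0 Ew6) = Submodule.span ℂ {w6gen} := by
  apply le_antisymm
  · rintro _ ⟨v, rfl⟩
    rw [dbar0_apply]
    exact Submodule.smul_mem _ _ (Submodule.mem_span_singleton_self _)
  · rw [Submodule.span_singleton_le_iff_mem]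
    refine ⟨fun p => if p = Sum.inl 1 then -1 else 0, ?_⟩
    rw [dbar0_apply]
    simp

lemma w6gen_ne_zero : w6gen ≠ 0 := by
  intro h
  have := congrFun (congrFun h (Sum.inl 0)) (Sum.inr 0)
  simp [w6gen] at this

lemma range_le_ker : LinearMap.range (Dbar0 Ew6) ≤ LinearMap.ker (Dbar1 Ew6) := by
  rintro _ ⟨v, rfl⟩
  rw [LinearMap.mem_ker, dbar1_closed_iff, dbar0_apply]
  simp [w6gen]

set_option synthInstance.maxHeartbeats 1000000 in
/-- For `w₆`:  `μ` is `∂̄`-closed iff `μ²₂ = 0` and `μ²₃ = 0`; the kernel of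
`∂̄₁` on `g^{*(0,1)} ⊗ g^{1,0}` has complex dimension 7, the image of `∂̄₀`
lies in this kernel, and `H¹_∂̄(g^{1,0}) = ker ∂̄₁ / im ∂̄₀` has complex
dimension 6. -/
theorem w6_H1_dimension :
    (∀ μ : (Fin 2 ⊕ Fin 1) → (Fin 2 ⊕ Fin 1) → ℂ,
      Dbar1 Ew6 μ = 0 ↔
        (μ (.inl 1) (.inl 1) = 0 ∧ μ (.inr 0) (.inl 1) = 0)) ∧
    Module.finrank ℂ (LinearMap.ker (Dbar1 Ew6)) = 7 ∧
    LinearMap.range (Dbar0 Ew6) ≤ LinearMap.ker (Dbar1 Ew6) ∧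
    Module.finrank ℂ
      (↥(LinearMap.ker (Dbar1 Ew6)) ⧸
        Submodule.comap (LinearMap.ker (Dbar1 Ew6)).subtype
          (LinearMap.range (Dbar0 Ew6))) = 6 := by
  refine ⟨dbar1_closed_iff, finrank_ker_dbar1, range_le_ker, ?_⟩
  have e := Submodule.comapSubtypeEquivOfLe range_le_ker
  have hcomap : Module.finrank ℂ
      (Submodule.comap (LinearMap.ker (Dbar1 Ew6)).subtype
        (LinearMap.range (Dbar0 Ew6))) = 1 := by
    rw [e.finrank_eq]
    have hr : Module.finrank ℂ (LinearMap.range (Dbar0 Ew6)) =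
        Module.finrank ℂ (Submodule.span ℂ {w6gen}) := by rw [range_dbar0]
    rw [hr, finrank_span_singleton w6gen_ne_zero]
  have hq := Submodule.finrank_quotient_add_finrank
    (Submodule.comap (LinearMap.ker (Dbar1 Ew6)).subtype (LinearMap.range (Dbar0 Ew6)))
  rw [hcomap, finrank_ker_dbar1] at hq
  omega
end
end
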